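/- Let i be an irrational real number with 0 < i < 1, let M = ([0, 5 + i/2] ∩ ℚ) ∪ (5 + i/2, ∞) regarded as an additive submonoid of the nonnegative reals, let F be a field, let R = F[X; M] be the monoid ring, let m be its maximal ideal of elements with zero constant term, and let D = R_m. Then D satisfies the PC condition: every proper ideal of D generated by two elements is contained in a proper principal ideal of D. -/

import Mathlib

open scoped Classical

/-- The "constant term" homomorphism of a monoid algebra `F[X; M]`, for a monoid `M` in
which `a + b = 0` forces `a = b = 0`; it sends `a₁X^{α₁} + ⋯ + aₙX^{αₙ}` to its
coefficient at the identity `0` of `M` (see `constantTermHom_apply`). -/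
noncomputable def constantTermHom (F M : Type*) [Field F] [AddCommMonoid M]
    (hM : ∀ a b : M, a + b = 0 → a = 0 ∧ b = 0) : AddMonoidAlgebra F M →ₐ[F] F :=
  AddMonoidAlgebra.lift F F M
    { toFun := fun a => if a.toAdd = 0 then 1 else 0
      map_one' := by simp
      map_mul' := fun a b => by
        rcases em (a.toAdd = 0) with ha | ha
        · rcases em (b.toAdd = 0) with hb | hb
          · simp [ha, hb]
          · have h : a.toAdd + b.toAdd ≠ 0 := fun h => hb (hM _ _ h).2
            simp [ha, hb, toAdd_mul, h]
        · have h : a.toAdd + b.toAdd ≠ 0 := fun h => ha (hM _ _ h).1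
          simp [ha, toAdd_mul, h] }

theorem constantTermHom_apply (F M : Type*) [Field F] [AddCommMonoid M]
    (hM : ∀ a b : M, a + b = 0 → a = 0 ∧ b = 0) (f : AddMonoidAlgebra F M) :
    constantTermHom F M hM f = f.coeff 0 := by
  classical
  rw [constantTermHom, AddMonoidAlgebra.lift_apply]
  simp only [MonoidHom.coe_mk, OneHom.coe_mk, toAdd_ofAdd, smul_eq_mul, mul_ite, mul_one,
    mul_zero]
  rw [Finsupp.sum_ite_eq' f.coeff 0 (fun _ b => b)]
  split
  · rfl
  · next h => exact (Finsupp.notMem_support_iff.mp h).symm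

/-- The augmentation ideal of the monoid algebra `F[X; M]`, consisting of all elements
with zero constant term (zero coefficient at the identity of `M`). -/
noncomputable def augIdeal (F M : Type*) [Field F] [AddCommMonoid M]
    (hM : ∀ a b : M, a + b = 0 → a = 0 ∧ b = 0) : Ideal (AddMonoidAlgebra F M) :=
  RingHom.ker (constantTermHom F M hM)

theorem mem_augIdeal_iff (F M : Type*) [Field F] [AddCommMonoid M]
    (hM : ∀ a b : M, a + b = 0 → a = 0 ∧ b = 0) (f : AddMonoidAlgebra F M) :
    f ∈ augIdeal F M hM ↔ f.coeff 0 = 0 := by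
  rw [augIdeal, RingHom.mem_ker, constantTermHom_apply]

/-- The augmentation ideal is a maximal ideal. -/
instance augIdeal_isMaximal (F M : Type*) [Field F] [AddCommMonoid M]
    {hM : ∀ a b : M, a + b = 0 → a = 0 ∧ b = 0} : (augIdeal F M hM).IsMaximal :=
  RingHom.ker_isMaximal_of_surjective _ (fun c =>
    ⟨AddMonoidAlgebra.single 0 c, by simp [constantTermHom]⟩)

/-- The set `M = ([0, 5 + i/2] ∩ ℚ) ∪ (5 + i/2, ∞)` of nonnegative reals. -/
def Mcarrier (i : ℝ) : Set ℝ :=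
  (Set.Icc (0 : ℝ) (5 + i / 2) ∩ Set.range ((↑) : ℚ → ℝ)) ∪ Set.Ioi (5 + i / 2)

theorem Mcarrier.nonneg {i : ℝ} (hi0 : 0 < i) {x : ℝ} (hx : x ∈ Mcarrier i) : 0 ≤ x := by
  rcases hx with ⟨⟨h1, _⟩, _⟩ | h
  · exact h1
  · have : (0 : ℝ) < 5 + i / 2 := by linarith
    exact le_of_lt (lt_trans this h)

theorem Mcarrier.add_mem {i : ℝ} (hi0 : 0 < i) {a b : ℝ}
    (ha : a ∈ Mcarrier i) (hb : b ∈ Mcarrier i) : a + b ∈ Mcarrier i := by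
  rcases ha with ⟨⟨ha1, ha2⟩, ⟨p, hp⟩⟩ | ha
  · rcases hb with ⟨⟨hb1, hb2⟩, ⟨s, hs⟩⟩ | hb
    · rcases lt_or_ge (5 + i / 2) (a + b) with h | h
      · exact Or.inr h
      · exact Or.inl ⟨⟨by linarith, h⟩, ⟨p + s, by push_cast [hp, hs]; ring⟩⟩
    · exact Or.inr (by simp only [Set.mem_Ioi] at hb ⊢; linarith)
  · have hb0 : 0 ≤ b := Mcarrier.nonneg hi0 hb
    exact Or.inr (by simp only [Set.mem_Ioi] at ha ⊢; linarith)

/-- `M` as an additive submonoid of the reals. -/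
def Msubmonoid (i : ℝ) (hi0 : 0 < i) : AddSubmonoid ℝ where
  carrier := Mcarrier i
  zero_mem' := Or.inl ⟨⟨le_refl 0, by linarith⟩, ⟨0, by norm_num⟩⟩
  add_mem' := fun ha hb => Mcarrier.add_mem hi0 ha hb

theorem Msubmonoid_pos_monoid (i : ℝ) (hi0 : 0 < i) :
    ∀ a b : Msubmonoid i hi0, a + b = 0 → a = 0 ∧ b = 0 := fun a b h => by
  have hs : (a : ℝ) + (b : ℝ) = 0 := by
    have := congrArg Subtype.val h
    push_cast at this
    exact this
  have ha := Mcarrier.nonneg hi0 a.2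
  have hb := Mcarrier.nonneg hi0 b.2
  refine ⟨Subtype.ext ?_, Subtype.ext ?_⟩ <;>
    simp only [ZeroMemClass.coe_zero] <;> linarith

/-
Both generators of a proper ideal of the local ring `D` may be taken to be numerators
`f, g ∈ m`, with finitely many exponents, all positive. Every positive element of `M` stays in
`M` after subtracting any sufficiently small positive rational (a rational point of `[0, 5 + i/2]`
stays rational, a point beyond `5 + i/2` stays beyond it), so one small positive rational `q`
works for all exponents of `f` and `g`, and the non-unit `X^q` divides both.
-/

open Filter Topology

def PrincipalContainment (R : Type*) [CommSemiring R] : Prop :=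
  ∀ a b : R, Ideal.span {a, b} ≠ ⊤ → ∃ c, Ideal.span {a, b} ≤ Ideal.span {c} ∧ Ideal.span {c} ≠ ⊤

theorem IsLocalRing.principalContainment_of_exists_dvd {R : Type*} [CommRing R] [IsLocalRing R]
    (h : ∀ a ∈ maximalIdeal R, ∀ b ∈ maximalIdeal R, ∃ c ∈ maximalIdeal R, c ∣ a ∧ c ∣ b) :
    PrincipalContainment R := by
  intro a b hab
  have hle := le_maximalIdeal hab
  obtain ⟨c, hc, hca, hcb⟩ :=
    h a (hle (Ideal.subset_span (by simp))) b (hle (Ideal.subset_span (by simp)))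
  refine ⟨c, ?_, fun htop => (maximalIdeal.isMaximal R).ne_top (top_le_iff.mp ?_)⟩
  · rw [Ideal.span_le, Set.insert_subset_iff, Set.singleton_subset_iff]
    exact ⟨Ideal.mem_span_singleton.mpr hca, Ideal.mem_span_singleton.mpr hcb⟩
  · exact htop ▸ Ideal.span_le.mpr (Set.singleton_subset_iff.mpr hc)

theorem Localization.AtPrime.principalContainment_of_exists_dvd {R : Type*} [CommRing R]
    (p : Ideal R) [p.IsPrime] (h : ∀ f ∈ p, ∀ g ∈ p, ∃ c ∈ p, c ∣ f ∧ c ∣ g) :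
    PrincipalContainment (Localization.AtPrime p) := by
  refine IsLocalRing.principalContainment_of_exists_dvd fun a ha b hb => ?_
  obtain ⟨f, s, rfl⟩ := IsLocalization.exists_mk'_eq p.primeCompl a
  obtain ⟨g, t, rfl⟩ := IsLocalization.exists_mk'_eq p.primeCompl b
  rw [IsLocalization.AtPrime.mk'_mem_maximal_iff _ p] at ha hb
  obtain ⟨c, hc, hcf, hcg⟩ := h f ha g hb
  refine ⟨algebraMap R _ c, (IsLocalization.AtPrime.to_map_mem_maximal_iff _ p c).mpr hc, ?_, ?_⟩
  all_goals
    rw [IsLocalization.mk'_eq_mul_mk'_one]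
    exact (map_dvd _ ‹_›).mul_right _

theorem AddMonoidAlgebra.single_one_dvd_of_forall_mem_support {k M : Type*} [CommSemiring k]
    [AddCommMonoid M] {f : AddMonoidAlgebra k M} {γ : M}
    (h : ∀ δ ∈ f.coeff.support, ∃ δ', γ + δ' = δ) : single γ (1 : k) ∣ f := by
  conv_rhs => rw [← sum_coeff_single f, Finsupp.sum]
  refine Finset.dvd_sum fun δ hδ => ?_
  obtain ⟨δ', rfl⟩ := h δ hδ
  exact ⟨single δ' (f.coeff (γ + δ')), by rw [single_mul_single, one_mul]⟩

theorem exists_dvd_of_mem_augIdeal {F M : Type*} [Field F] [AddCommMonoid M]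
    (hM : ∀ a b : M, a + b = 0 → a = 0 ∧ b = 0)
    (hbound : ∀ T : Finset M, 0 ∉ T → ∃ γ ≠ 0, ∀ δ ∈ T, ∃ δ', γ + δ' = δ) :
    ∀ f ∈ augIdeal F M hM, ∀ g ∈ augIdeal F M hM,
      ∃ c ∈ augIdeal F M hM, c ∣ f ∧ c ∣ g := by
  intro f hf g hg
  rw [mem_augIdeal_iff] at hf hg
  have h0 : (0 : M) ∉ f.coeff.support ∪ g.coeff.support := by simp [hf, hg]
  obtain ⟨γ, hγ, hγT⟩ := hbound _ h0
  refine ⟨AddMonoidAlgebra.single γ 1, ?_, ?_, ?_⟩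
  · simp [mem_augIdeal_iff, AddMonoidAlgebra.coeff_single, hγ]
  · exact AddMonoidAlgebra.single_one_dvd_of_forall_mem_support fun δ hδ =>
      hγT δ (Finset.mem_union_left _ hδ)
  · exact AddMonoidAlgebra.single_one_dvd_of_forall_mem_support fun δ hδ =>
      hγT δ (Finset.mem_union_right _ hδ)

namespace Mcarrier

theorem ratCast_mem (i : ℝ) {q : ℚ} (hq : 0 ≤ q) : (q : ℝ) ∈ Mcarrier i := by
  rcases le_or_gt (q : ℝ) (5 + i / 2) with h | h
  · exact Or.inl ⟨⟨Rat.cast_nonneg.mpr hq, h⟩, q, rfl⟩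
  · exact Or.inr h

theorem eventually_sub_ratCast_mem {i δ : ℝ} (hδ : δ ∈ Mcarrier i) (hδ0 : 0 < δ) :
    ∀ᶠ q : ℚ in 𝓝[>] 0, δ - q ∈ Mcarrier i := by
  have hcast : Tendsto (fun q : ℚ => (q : ℝ)) (𝓝[>] 0) (𝓝 0) :=
    (Rat.continuous_coe_real.tendsto' 0 0 Rat.cast_zero).mono_left nhdsWithin_le_nhds
  rcases hδ with ⟨⟨-, hδ⟩, r, rfl⟩ | hδ
  · filter_upwards [hcast.eventually (eventually_lt_nhds hδ0), self_mem_nhdsWithin]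
      with q hqr hq
    refine Or.inl ⟨⟨by linarith, by linarith [(Rat.cast_pos.mpr hq : (0 : ℝ) < q)]⟩, r - q, ?_⟩
    push_cast
    rfl
  · filter_upwards [hcast.eventually (eventually_lt_nhds (sub_pos.mpr hδ))] with q hq
    exact Or.inr (show 5 + i / 2 < δ - q by linarith)

end Mcarrier

theorem Msubmonoid.exists_add_eq_of_zero_notMem (i : ℝ) (hi0 : 0 < i)
    (T : Finset (Msubmonoid i hi0)) (hT : 0 ∉ T) : ∃ γ ≠ 0, ∀ δ ∈ T, ∃ δ', γ + δ' = δ := by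
  have hpos : ∀ δ ∈ T, (0 : ℝ) < δ := fun δ hδ =>
    (Mcarrier.nonneg hi0 δ.2).lt_of_ne' fun h =>
      hT (by rwa [show δ = 0 from Subtype.ext h] at hδ)
  have hT' : ∀ᶠ q : ℚ in 𝓝[>] 0, ∀ δ ∈ T, (δ : ℝ) - q ∈ Mcarrier i :=
    (eventually_all_finset T).mpr fun δ hδ => Mcarrier.eventually_sub_ratCast_mem δ.2 (hpos δ hδ)
  obtain ⟨q, hqT, hq⟩ := (hT'.and self_mem_nhdsWithin).exists
  refine ⟨⟨q, Mcarrier.ratCast_mem i hq.le⟩, fun h => ?_, fun δ hδ => ⟨⟨_, hqT δ hδ⟩, ?_⟩⟩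
  · exact (Rat.cast_pos.mpr hq).ne' (congrArg Subtype.val h)
  · exact Subtype.ext (add_sub_cancel _ _)

theorem localization_monoidAlgebra_M_pc_general (i : ℝ) (hi0 : 0 < i)
    (F : Type*) [Field F] :
    ∀ a b : Localization.AtPrime (augIdeal F (Msubmonoid i hi0) (Msubmonoid_pos_monoid i hi0)),
      Ideal.span {a, b} ≠ ⊤ →
      ∃ c, Ideal.span {a, b} ≤ Ideal.span {c} ∧
        Ideal.span ({c} : Set (Localization.AtPrime
          (augIdeal F (Msubmonoid i hi0) (Msubmonoid_pos_monoid i hi0)))) ≠ ⊤ :=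
  Localization.AtPrime.principalContainment_of_exists_dvd _ <|
    exists_dvd_of_mem_augIdeal _ (Msubmonoid.exists_add_eq_of_zero_notMem i hi0)

/-- Let `i` be an irrational real with `0 < i < 1`, let
`M = ([0, 5 + i/2] ∩ ℚ) ∪ (5 + i/2, ∞)` as an additive submonoid of the nonnegative
reals, let `F` be a field, `R = F[X; M]` the monoid ring, `m` its maximal ideal of
elements with zero constant term, and `D = R_m`. Then `D` satisfies the PC condition:
every proper two-generated ideal of `D` is contained in a proper principal ideal. -/
theorem localization_monoidAlgebra_M_pc (i : ℝ) (hi : Irrational i) (hi0 : 0 < i)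
    (hi1 : i < 1) (F : Type*) [Field F] :
    ∀ a b : Localization.AtPrime (augIdeal F (Msubmonoid i hi0) (Msubmonoid_pos_monoid i hi0)),
      Ideal.span {a, b} ≠ ⊤ →
      ∃ c, Ideal.span {a, b} ≤ Ideal.span {c} ∧
        Ideal.span ({c} : Set (Localization.AtPrime
          (augIdeal F (Msubmonoid i hi0) (Msubmonoid_pos_monoid i hi0)))) ≠ ⊤ :=
  localization_monoidAlgebra_M_pc_general i hi0 F
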